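/- Let Φx ∈ ℝ^{(T+1)n_x×(T+1)n_x} and Φu ∈ ℝ^{(T+1)n_u×(T+1)n_x} be block-lower-triangular matrices satisfying (I − Z𝒜)Φx − ZℬΦu = I, and let Σ ∈ ℝ^{(T+1)n_x×(T+1)n_x} be block-lower-triangular and invertible. Then Φ̃x := ΦxΣ and Φ̃u := ΦuΣ are block-lower-triangular and satisfy (I − Z𝒜)Φ̃x − ZℬΦ̃u = Σ; moreover Φx and Φ̃x are invertible and the two parameterizations yield the same state feedback controller, i.e. Φ̃uΦ̃x^{-1} = ΦuΦx^{-1}. -/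

import Mathlib

/-!
`Z𝒜` and `ZℬΦu` are strictly block-lower-triangular, so the constraint reads
`(I - Z𝒜) Φx = I + ZℬΦu` with both `I - Z𝒜` and `I + ZℬΦu` unipotent; taking determinants,
`det Φx = 1`. The rest is algebra: right multiplication by `Σ` preserves block-lower-triangularity
and turns the right-hand side `I` of the constraint into `Σ`, and `Σ` cancels in `ΦuΣ (ΦxΣ)⁻¹`.
-/

open Matrix Finset

noncomputable section

/-- A `(T+1)×(T+1)`-block matrix (with `p×q` blocks) is block-lower-triangular if its
`(i,j)` block vanishes whenever `j > i`. -/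
def IsBLT {T p q : ℕ} (M : Matrix (Fin (T+1) × Fin p) (Fin (T+1) × Fin q) ℝ) : Prop :=
  ∀ (i j : Fin (T+1)) (a : Fin p) (b : Fin q), i < j → M (i, a) (j, b) = 0

/-- The block-downshift matrix `Z`: its `(i,j)` block is the identity if `i = j+1`,
and zero otherwise. -/
def dshift (T n : ℕ) : Matrix (Fin (T+1) × Fin n) (Fin (T+1) × Fin n) ℝ :=
  Matrix.of fun i j => if ((i.1 : ℕ) = (j.1 : ℕ) + 1 ∧ i.2 = j.2) then (1 : ℝ) else 0

/-- `blkdiag(M, …, M, 0)`: `T` copies of `M` on the block diagonal followed by one zero block. -/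
def blkDiag {p q : ℕ} (T : ℕ) (M : Matrix (Fin p) (Fin q) ℝ) :
    Matrix (Fin (T+1) × Fin p) (Fin (T+1) × Fin q) ℝ :=
  Matrix.of fun i j => if (i.1 = j.1 ∧ (i.1 : ℕ) < T) then M i.2 j.2 else 0

theorem Matrix.det_one_add_eq_one_of_strictBlockTriangular {m α R : Type*} [Fintype m]
    [DecidableEq m] [LinearOrder α] [CommRing R] {b : m → α} {N : Matrix m m R}
    (hN : ∀ i j, b j ≤ b i → N i j = 0) : (1 + N).det = 1 := by
  have htri : (1 + N).BlockTriangular b := fun i j hji => by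
    rw [add_apply, one_apply_ne (fun hij => hji.ne (congrArg b hij).symm), hN i j hji.le,
      add_zero]
  have hdiag (k : α) : (1 + N).toSquareBlock b k = 1 := by
    ext ⟨i, hi⟩ ⟨j, hj⟩
    simp only [toSquareBlock_def, of_apply, add_apply, hN i j (hj.trans hi.symm).le, add_zero,
      one_apply, Subtype.mk.injEq]
  rw [htri.det]
  exact prod_eq_one fun k _ => by rw [hdiag, det_one]

def IsStrictBLT {T p q : ℕ} (M : Matrix (Fin (T+1) × Fin p) (Fin (T+1) × Fin q) ℝ) : Prop :=
  ∀ (i j : Fin (T+1)) (a : Fin p) (b : Fin q), i ≤ j → M (i, a) (j, b) = 0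

section BlockLowerTriangular

variable {T p q r : ℕ} {M : Matrix (Fin (T+1) × Fin p) (Fin (T+1) × Fin q) ℝ}
  {N : Matrix (Fin (T+1) × Fin q) (Fin (T+1) × Fin r) ℝ}

theorem IsBLT.mul (hM : IsBLT M) (hN : IsBLT N) : IsBLT (M * N) := by
  intro i j a b hij
  rw [mul_apply]
  refine sum_eq_zero fun ⟨k, c⟩ _ => ?_
  rcases lt_or_ge i k with hik | hki
  · rw [hM i k a c hik, zero_mul]
  · rw [hN k j c b (hki.trans_lt hij), mul_zero]

theorem IsStrictBLT.mul_isBLT (hM : IsStrictBLT M) (hN : IsBLT N) : IsStrictBLT (M * N) := by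
  intro i j a b hij
  rw [mul_apply]
  refine sum_eq_zero fun ⟨k, c⟩ _ => ?_
  rcases le_or_gt i k with hik | hki
  · rw [hM i k a c hik, zero_mul]
  · rw [hN k j c b (hki.trans_le hij), mul_zero]

theorem isStrictBLT_dshift (n : ℕ) : IsStrictBLT (dshift T n) := by
  intro i j a b hij
  have : ¬(i : ℕ) = j + 1 := fun h => (Fin.le_iff_val_le_val.mp hij).not_gt (by omega)
  simp [dshift, this]

theorem isBLT_blkDiag (A : Matrix (Fin p) (Fin q) ℝ) : IsBLT (blkDiag T A) := by
  intro i j a b hij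
  simp [blkDiag, hij.ne]

theorem IsStrictBLT.det_one_add {N : Matrix (Fin (T+1) × Fin p) (Fin (T+1) × Fin p) ℝ}
    (hN : IsStrictBLT N) : (1 + N).det = 1 :=
  det_one_add_eq_one_of_strictBlockTriangular (b := fun x => OrderDual.toDual x.1)
    fun ⟨i, a⟩ ⟨j, b⟩ hji => hN i j a b hji

theorem IsStrictBLT.det_one_sub {N : Matrix (Fin (T+1) × Fin p) (Fin (T+1) × Fin p) ℝ}
    (hN : IsStrictBLT N) : (1 - N).det = 1 := by
  rw [sub_eq_add_neg]
  exact IsStrictBLT.det_one_add fun i j a b hij => by rw [neg_apply, hN i j a b hij, neg_zero]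

end BlockLowerTriangular

theorem det_eq_one_of_achievable {nx nu T : ℕ}
    (Ahat : Matrix (Fin nx) (Fin nx) ℝ) (Bhat : Matrix (Fin nx) (Fin nu) ℝ)
    {Phix : Matrix (Fin (T+1) × Fin nx) (Fin (T+1) × Fin nx) ℝ}
    {Phiu : Matrix (Fin (T+1) × Fin nu) (Fin (T+1) × Fin nx) ℝ} (hPhiu : IsBLT Phiu)
    (haff : (1 - dshift T nx * blkDiag T Ahat) * Phix -
        dshift T nx * blkDiag T Bhat * Phiu = 1) :
    Phix.det = 1 := by
  have hZA := (isStrictBLT_dshift (T := T) nx).mul_isBLT (isBLT_blkDiag Ahat)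
  have hZBPhiu := ((isStrictBLT_dshift nx).mul_isBLT (isBLT_blkDiag Bhat)).mul_isBLT hPhiu
  have hprod : (1 - dshift T nx * blkDiag T Ahat) * Phix =
      1 + dshift T nx * blkDiag T Bhat * Phiu := sub_eq_iff_eq_add.mp haff
  simpa [hZA.det_one_sub, hZBPhiu.det_one_add] using congrArg det hprod

theorem statement3_general (nx nu T : ℕ)
    (Ahat : Matrix (Fin nx) (Fin nx) ℝ) (Bhat : Matrix (Fin nx) (Fin nu) ℝ)
    (Phix Sig : Matrix (Fin (T+1) × Fin nx) (Fin (T+1) × Fin nx) ℝ)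
    (Phiu : Matrix (Fin (T+1) × Fin nu) (Fin (T+1) × Fin nx) ℝ)
    (hPhixBLT : IsBLT Phix) (hPhiuBLT : IsBLT Phiu)
    (haff : (1 - dshift T nx * blkDiag T Ahat) * Phix -
        dshift T nx * blkDiag T Bhat * Phiu = 1)
    (hSigBLT : IsBLT Sig) (hSig : IsUnit Sig) :
    IsBLT (Phix * Sig) ∧ IsBLT (Phiu * Sig) ∧
    (1 - dshift T nx * blkDiag T Ahat) * (Phix * Sig) -
        dshift T nx * blkDiag T Bhat * (Phiu * Sig) = Sig ∧
    IsUnit Phix ∧ IsUnit (Phix * Sig) ∧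
    (Phiu * Sig) * (Phix * Sig)⁻¹ = Phiu * Phix⁻¹ := by
  have hPhix : IsUnit Phix := by
    rw [isUnit_iff_isUnit_det, det_eq_one_of_achievable Ahat Bhat hPhiuBLT haff]
    exact isUnit_one
  refine ⟨hPhixBLT.mul hSigBLT, hPhiuBLT.mul hSigBLT, ?_, hPhix, hPhix.mul hSig, ?_⟩
  · simp only [← Matrix.mul_assoc, ← sub_mul, haff, Matrix.one_mul]
  · rw [Matrix.mul_inv_rev, Matrix.mul_assoc, ← Matrix.mul_assoc Sig,
      mul_nonsing_inv Sig ((isUnit_iff_isUnit_det Sig).mp hSig), Matrix.one_mul]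

theorem statement3 (nx nu T : ℕ) (hnx : 1 ≤ nx) (hnu : 1 ≤ nu) (hT : 1 ≤ T)
    (Ahat : Matrix (Fin nx) (Fin nx) ℝ) (Bhat : Matrix (Fin nx) (Fin nu) ℝ)
    (Phix Sig : Matrix (Fin (T+1) × Fin nx) (Fin (T+1) × Fin nx) ℝ)
    (Phiu : Matrix (Fin (T+1) × Fin nu) (Fin (T+1) × Fin nx) ℝ)
    (hPhixBLT : IsBLT Phix) (hPhiuBLT : IsBLT Phiu)
    (haff : (1 - dshift T nx * blkDiag T Ahat) * Phix -
        dshift T nx * blkDiag T Bhat * Phiu = 1)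
    (hSigBLT : IsBLT Sig) (hSig : IsUnit Sig) :
    IsBLT (Phix * Sig) ∧ IsBLT (Phiu * Sig) ∧
    (1 - dshift T nx * blkDiag T Ahat) * (Phix * Sig) -
        dshift T nx * blkDiag T Bhat * (Phiu * Sig) = Sig ∧
    IsUnit Phix ∧ IsUnit (Phix * Sig) ∧
    (Phiu * Sig) * (Phix * Sig)⁻¹ = Phiu * Phix⁻¹ :=
  statement3_general nx nu T Ahat Bhat Phix Sig Phiu hPhixBLT hPhiuBLT haff hSigBLT hSig
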